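/- Let g : ℝⁿ → ℝᵐ be differentiable (ℝⁿ equipped with its standard Euclidean inner product), and for y ∈ ℝⁿ let P(y) : ℝⁿ → ℝⁿ denote the orthogonal projection onto the null space ker Dg(y) of the derivative of g at y. Let h : ℝⁿ → ℝⁿ be any vector field and let z : ℝ → ℝⁿ be a differentiable solution of the ambient forcing equation z'(t) = P(z(t)) h(z(t)) with initial condition satisfying g(z(0)) = 0. Then g(z(t)) = 0 for all t ∈ ℝ, i.e. the trajectory of the ambient forcing dynamics stays on the constraint manifold M = {z ∈ ℝⁿ : g(z) = 0}. -/

import Mathlib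

/-- Let `g : ℝⁿ → ℝᵐ` be differentiable and let `P y` be the orthogonal
projection onto `ker Dg(y)`. For any vector field `h`, every differentiable solution of the
ambient forcing equation `z' t = P (z t) (h (z t))` with `g (z 0) = 0` stays on the
constraint manifold: `g (z t) = 0` for all `t`. -/
theorem ambient_forcing_preserves_manifold
    (n m : ℕ)
    (g : EuclideanSpace ℝ (Fin n) → EuclideanSpace ℝ (Fin m))
    (hg : Differentiable ℝ g)
    (h : EuclideanSpace ℝ (Fin n) → EuclideanSpace ℝ (Fin n))
    (z : ℝ → EuclideanSpace ℝ (Fin n))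
    (hz : ∀ t : ℝ, HasDerivAt z
      ((Submodule.orthogonalProjectionOnto (LinearMap.ker (fderiv ℝ g (z t) : EuclideanSpace ℝ (Fin n) →ₗ[ℝ] EuclideanSpace ℝ (Fin m))) (h (z t)) :
        EuclideanSpace ℝ (Fin n))) t)
    (h0 : g (z 0) = 0) :
    ∀ t : ℝ, g (z t) = 0 := by
  have key : ∀ t : ℝ, HasDerivAt (fun s => g (z s)) 0 t := by
    intro t
    have h1 := (hg (z t)).hasFDerivAt.comp_hasDerivAt t (hz t)
    have h2 : fderiv ℝ g (z t)
        ((Submodule.orthogonalProjectionOnto (LinearMap.ker (fderiv ℝ g (z t) : EuclideanSpace ℝ (Fin n) →ₗ[ℝ] EuclideanSpace ℝ (Fin m))) (h (z t)) :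
          EuclideanSpace ℝ (Fin n))) = 0 :=
      (Submodule.orthogonalProjectionOnto (LinearMap.ker (fderiv ℝ g (z t) : EuclideanSpace ℝ (Fin n) →ₗ[ℝ] EuclideanSpace ℝ (Fin m))) (h (z t))).2
    rwa [h2] at h1
  have hconst : ∀ t : ℝ, g (z t) = g (z 0) := by
    intro t
    have hdiff : Differentiable ℝ (fun s => g (z s)) := fun s => (key s).differentiableAt
    apply is_const_of_deriv_eq_zero (𝕜 := ℝ) hdiff
    intro s
    exact (key s).deriv
  intro t
  rw [hconst t, h0]
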